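/- arXiv:2001.00397 — 2 statements merged into one kernel-verified Lean document; each statement's English description precedes it below -/
import Mathlib

section
/- Let y1, y2 > 0, y2 > 1, h = sqrt(y1+y2-y1y2) > 0. Then lim_{r↓1} (1/(2πi)) ∮_{|ξ|=1} [y2(1+hrξ)(1+h/(rξ))/((y2+hrξ)(y2+h/(rξ)))] · (1-y2) r h /(y2 r ξ + h)^2 dξ = -y1 y2 h^2/(y1+y2)^3. -/
/-!
For `1 < r < y2 / h` the integrand is a rational function of `ξ` with a triple pole at
`-h / (y2 r)` inside the unit circle and a simple pole at `-y2 / (h r)` outside it. Its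
partial-fraction decomposition shows that the integral equals `2πi` times the residue at the
inner pole, which does not depend on `r`; so the limit is that residue. Since
`h² = y1 + y2 - y1 y2` gives `y2 - h² = y1 (y2 - 1)` and `y2² - h² = (y2 - 1)(y1 + y2)`, the
residue simplifies to `-y1 y2 h² / (y1 + y2)³`.
-/

open Filter Metric Complex Real

theorem circleIntegral_sub_inv_of_notMem_closedBall {c w : ℂ} {R : ℝ} (hR : 0 ≤ R)
    (hw : w ∉ closedBall c R) : ∮ z in C(c, R), (z - w)⁻¹ = 0 := by
  have hne : ∀ z ∈ closedBall c R, z - w ≠ 0 := fun z hz h ↦ hw (sub_eq_zero.1 h ▸ hz)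
  have hd : DifferentiableOn ℂ (fun z ↦ (z - w)⁻¹) (closedBall c R) :=
    (differentiableOn_id.sub_const w).inv hne
  exact (hd.mono closure_ball_subset_closedBall).diffContOnCl.circleIntegral_eq_zero hR

theorem circleIntegral_partialFraction {c w₀ w₁ : ℂ} {R : ℝ} (hw₀ : w₀ ∈ ball c R)
    (hw₁ : w₁ ∉ closedBall c R) (a b e d : ℂ) :
    ∮ z in C(c, R), (a * (z - w₀)⁻¹ + b * ((z - w₀) ^ 2)⁻¹ + e * ((z - w₀) ^ 3)⁻¹ +
      d * (z - w₁)⁻¹) = 2 * π * I * a := by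
  have hR : 0 < R := pos_of_mem_ball hw₀
  have h₀ : w₀ ∉ sphere c |R| := by
    rw [abs_of_pos hR]; exact fun h ↦ (mem_sphere.1 h).not_lt (mem_ball.1 hw₀)
  have h₁ : w₁ ∉ sphere c |R| := fun h ↦ hw₁ (sphere_subset_closedBall (abs_of_pos hR ▸ h))
  have hzpow : ∀ (k w : ℂ) (n : ℤ), w ∉ sphere c |R| →
      CircleIntegrable (fun z ↦ k * (z - w) ^ n) c R := fun k w n hw ↦
    (circleIntegrable_sub_zpow_iff.2 (Or.inr (Or.inr hw))).const_fun_smul (a := k)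
  simp only [← zpow_natCast, ← zpow_neg, Nat.cast_ofNat]
  simp only [← zpow_neg_one]
  rw [circleIntegral.integral_add (((hzpow _ _ _ h₀).fun_add (hzpow _ _ _ h₀)).fun_add
      (hzpow _ _ _ h₀)) (hzpow _ _ _ h₁),
    circleIntegral.integral_add ((hzpow _ _ _ h₀).fun_add (hzpow _ _ _ h₀)) (hzpow _ _ _ h₀),
    circleIntegral.integral_add (hzpow _ _ _ h₀) (hzpow _ _ _ h₀)]
  simp only [circleIntegral.integral_const_mul, zpow_neg_one,
    circleIntegral.integral_sub_inv_of_mem_ball hw₀,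
    circleIntegral_sub_inv_of_notMem_closedBall hR.le hw₁,
    circleIntegral.integral_sub_zpow_of_ne (by decide : (-2 : ℤ) ≠ -1),
    circleIntegral.integral_sub_zpow_of_ne (by decide : (-3 : ℤ) ≠ -1)]
  ring

noncomputable def deltaIntegrand (y h r : ℝ) (ξ : ℂ) : ℂ :=
  ((y : ℂ) * (1 + (h : ℂ) * (r : ℂ) * ξ) * (1 + (h : ℂ) / ((r : ℂ) * ξ)) /
      (((y : ℂ) + (h : ℂ) * (r : ℂ) * ξ) * ((y : ℂ) + (h : ℂ) / ((r : ℂ) * ξ)))) *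
    (((1 - y : ℝ) : ℂ) * (r : ℂ) * (h : ℂ) / ((y : ℂ) * (r : ℂ) * ξ + (h : ℂ)) ^ 2)

/-- The residue of `deltaIntegrand y h r` at its triple pole `-h / (y r)`. -/
def deltaResidue {K : Type*} [Field K] (y h : K) : K :=
  -((y - 1) ^ 2 * h ^ 2 * y * (y - h ^ 2)) / (y ^ 2 - h ^ 2) ^ 3

theorem deltaResidue_eq {K : Type*} [Field K] {x y h : K} (hh : h ^ 2 = x + y - x * y)
    (hy : y - 1 ≠ 0) (hxy : x + y ≠ 0) :
    deltaResidue y h = -(x * y * h ^ 2) / (x + y) ^ 3 := by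
  have hfac : y ^ 2 - h ^ 2 = (y - 1) * (x + y) := by rw [hh]; ring
  rw [deltaResidue, hfac, div_eq_div_iff (by simp [hy, hxy]) (by simp [hxy]), hh]
  ring

/- The two residues cancel because the integrand is `O(ξ⁻²)` at infinity. -/
theorem deltaIntegrand_partialFraction {K : Type*} [Field K] {y h r ξ w₀ w₁ : K} (hy : y ≠ 0)
    (hh : h ≠ 0) (hr : r ≠ 0) (hξ : ξ ≠ 0) (hyh : y ^ 2 - h ^ 2 ≠ 0)
    (hw₀ : w₀ = -(h / (y * r))) (hw₁ : w₁ = -(y / (h * r))) (hξw₀ : ξ - w₀ ≠ 0)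
    (hξw₁ : ξ - w₁ ≠ 0) :
    y * (1 + h * r * ξ) * (1 + h / (r * ξ)) / ((y + h * r * ξ) * (y + h / (r * ξ))) *
        ((1 - y) * r * h / (y * r * ξ + h) ^ 2) =
      deltaResidue y h * (ξ - w₀)⁻¹ +
        -((y - 1) * h * (y ^ 3 + (y - 3) * y ^ 2 * h ^ 2 + h ^ 4)) /
          (y ^ 2 * r * (y ^ 2 - h ^ 2) ^ 2) * ((ξ - w₀) ^ 2)⁻¹ +
        -((y - 1) ^ 2 * h ^ 2 * (y - h ^ 2)) / (y ^ 3 * r ^ 2 * (y ^ 2 - h ^ 2)) *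
          ((ξ - w₀) ^ 3)⁻¹ +
        -deltaResidue y h * (ξ - w₁)⁻¹ := by
  have h₀ : ξ - w₀ = (y * r * ξ + h) / (y * r) := by rw [hw₀]; field_simp; ring
  have h₁ : ξ - w₁ = (h * r * ξ + y) / (h * r) := by rw [hw₁]; field_simp; ring
  have hd₀ : y * r * ξ + h ≠ 0 := fun h0 ↦ hξw₀ (by rw [h₀, h0, zero_div])
  have hd₁ : h * r * ξ + y ≠ 0 := fun h0 ↦ hξw₁ (by rw [h₁, h0, zero_div])
  have hd₁' : y + h * r * ξ ≠ 0 := by rwa [add_comm]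
  have hd₂ : y + h / (r * ξ) = (y * r * ξ + h) / (r * ξ) := by field_simp
  rw [h₀, h₁, hd₂, deltaResidue]
  field_simp
  ring

theorem circleIntegral_deltaIntegrand {y h r : ℝ} (hy : 0 < y) (hh : 0 < h) (hin : h < y * r)
    (hout : h * r < y) :
    ∮ ξ in C((0 : ℂ), 1), deltaIntegrand y h r ξ = 2 * π * I * deltaResidue (y : ℂ) (h : ℂ) := by
  have hr : 0 < r := pos_of_mul_pos_right (hh.trans hin) hy.le
  have hyh : (y : ℂ) ^ 2 - (h : ℂ) ^ 2 ≠ 0 := by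
    rw [← ofReal_pow, ← ofReal_pow, ← ofReal_sub, ofReal_ne_zero]
    nlinarith
  set w₀ : ℂ := ((-(h / (y * r)) : ℝ) : ℂ)
  set w₁ : ℂ := ((-(y / (h * r)) : ℝ) : ℂ)
  have hw₀ : ‖w₀‖ < 1 := by
    rw [norm_real, norm_neg, Real.norm_of_nonneg (by positivity), div_lt_one (by positivity)]
    exact hin
  have hw₁ : 1 < ‖w₁‖ := by
    rw [norm_real, norm_neg, Real.norm_of_nonneg (by positivity), one_lt_div (by positivity)]
    exact hout
  refine (circleIntegral.integral_congr zero_le_one fun ξ hξ ↦ ?_).trans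
    (circleIntegral_partialFraction (mem_ball_zero_iff.2 hw₀)
      (by rw [mem_closedBall_zero_iff]; exact hw₁.not_ge) _ ?_ ?_ ?_)
  rw [mem_sphere_zero_iff_norm] at hξ
  have hne : ∀ w : ℂ, ‖w‖ ≠ 1 → ξ - w ≠ 0 := fun w hw h0 ↦ hw (sub_eq_zero.1 h0 ▸ hξ)
  rw [deltaIntegrand, ofReal_sub, ofReal_one]
  exact deltaIntegrand_partialFraction (r := (r : ℂ)) (by exact_mod_cast hy.ne')
    (by exact_mod_cast hh.ne') (by exact_mod_cast hr.ne') (norm_ne_zero_iff.1 (hξ ▸ one_ne_zero))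
    hyh (by simp [w₀]) (by simp [w₁]) (hne w₀ hw₀.ne) (hne w₁ hw₁.ne')

theorem stmt15 (y1 y2 h : ℝ) (hy1 : 0 < y1) (hy2 : 1 < y2)
    (hpos : 0 < y1 + y2 - y1 * y2) (hh : h = Real.sqrt (y1 + y2 - y1 * y2)) :
    Tendsto (fun r : ℝ =>
      (1 / (2 * (Real.pi : ℂ) * Complex.I)) *
        ∮ ξ in C((0 : ℂ), 1),
          ((y2 : ℂ) * (1 + (h : ℂ) * (r : ℂ) * ξ) * (1 + (h : ℂ) / ((r : ℂ) * ξ)) /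
            (((y2 : ℂ) + (h : ℂ) * (r : ℂ) * ξ) * ((y2 : ℂ) + (h : ℂ) / ((r : ℂ) * ξ)))) *
          (((1 - y2 : ℝ) : ℂ) * (r : ℂ) * (h : ℂ) / ((y2 : ℂ) * (r : ℂ) * ξ + (h : ℂ)) ^ 2))
      (nhdsWithin 1 (Set.Ioi 1))
      (nhds ((-(y1 * y2 * h ^ 2) / (y1 + y2) ^ 3 : ℝ) : ℂ)) := by
  change Tendsto (fun r : ℝ ↦ 1 / (2 * (π : ℂ) * I) * ∮ ξ in C((0 : ℂ), 1), deltaIntegrand y2 h r ξ)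
    _ _
  have hy2₀ : 0 < y2 := one_pos.trans hy2
  have hh₀ : 0 < h := hh ▸ Real.sqrt_pos.2 hpos
  have hh₂ : h ^ 2 = y1 + y2 - y1 * y2 := hh ▸ Real.sq_sqrt hpos.le
  have hhy2 : h < y2 := by nlinarith
  have hres : deltaResidue y2 h = -(y1 * y2 * h ^ 2) / (y1 + y2) ^ 3 :=
    deltaResidue_eq hh₂ (by linarith) (by linarith)
  refine tendsto_const_nhds.congr' ?_
  filter_upwards [Ioo_mem_nhdsGT ((one_lt_div hh₀).2 hhy2)] with r ⟨hr₁, hr₂⟩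
  rw [circleIntegral_deltaIntegrand hy2₀ hh₀ (by nlinarith) ((lt_div_iff₀' hh₀).1 hr₂), ← hres,
    one_div, inv_mul_cancel_left₀ two_pi_I_ne_zero]
  simp [deltaResidue]
end

section
/- Let y1 > 1, y2 > 1, h = sqrt(y1+y2-y1y2) > 0. Then lim_{r↓1} (1/(4πi)) ∮_{|ξ|=1} [y1 y2 ((1+hrξ)(1+h/(rξ)) - (y2-1)^2)^2 / ((y2+hrξ)(y2+h/(rξ)))^2] · (1/(ξ-1/r) + 1/(ξ+1/r) - 2/(ξ + h/(y2 r))) dξ = y1 y2 h^2/(y1+y2)^2. -/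
/-!
For `1 < r < y₂ / h` the integrand is a rational function of `ξ` with simple poles at `±1/r`, a
triple pole at `-h/(y₂ r)` (all inside the unit circle) and a simple pole at `-y₂/(h r)` outside.
Integrating its partial fraction decomposition term by term, only the three simple-pole terms
inside the circle contribute, and under `h² = y₁ + y₂ - y₁ y₂` their coefficients add up to
`2 y₁ y₂ h² / (y₁ + y₂)²`. So the expression is constant on `(1, y₂ / h)`, equal to the limit.
-/

open Filter Metric Set Complex Real

namespace circleIntegral

theorem integral_sub_inv_of_notMem_closedBall {c w : ℂ} {R : ℝ} (hR : 0 ≤ R)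
    (hw : w ∉ closedBall c R) : (∮ z in C(c, R), (z - w)⁻¹) = 0 := by
  refine DiffContOnCl.circleIntegral_eq_zero hR <|
    DifferentiableOn.diffContOnCl_ball (U := {w}ᶜ) ?_ ?_
  · exact (differentiableOn_id.sub_const w).inv fun z hz ↦ sub_ne_zero.mpr hz
  · simpa using hw

open scoped Classical in
/-- For `w` on the circle and `k = 1` the integrand is not integrable, and the integral is the
junk value `0`. -/
theorem integral_sub_pow_inv (c w : ℂ) {R : ℝ} (hR : 0 ≤ R) (k : ℕ) :
    (∮ z in C(c, R), ((z - w) ^ k)⁻¹) = if k = 1 ∧ w ∈ ball c R then 2 * π * I else 0 := by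
  split_ifs with hk
  · obtain ⟨rfl, hw⟩ := hk
    simpa using integral_sub_inv_of_mem_ball hw
  · simp_rw [← zpow_natCast, ← zpow_neg]
    by_cases hk1 : k = 1
    · subst hk1
      have hw : w ∉ ball c R := by tauto
      rcases (not_lt.mp (mt mem_ball.mpr hw)).eq_or_lt with hs | ho
      · exact integral_sub_zpow_of_undef (by norm_num) (by rw [abs_of_nonneg hR]; exact hs.symm)
      · simpa using integral_sub_inv_of_notMem_closedBall hR (by simpa using ho)
    · exact integral_sub_zpow_of_ne (by omega) c w R

open scoped Classical in
theorem integral_sum_mul_sub_pow_inv {ι : Type*} (s : Finset ι) (a w : ι → ℂ) (k : ι → ℕ)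
    {c : ℂ} {R : ℝ} (hR : 0 ≤ R) (hw : ∀ i ∈ s, w i ∉ sphere c R) :
    (∮ z in C(c, R), ∑ i ∈ s, a i * ((z - w i) ^ k i)⁻¹) =
      2 * π * I * ∑ i ∈ s with k i = 1 ∧ w i ∈ ball c R, a i := by
  have hint (i) (hi : i ∈ s) : CircleIntegrable (fun z ↦ a i * ((z - w i) ^ k i)⁻¹) c R :=
    ContinuousOn.circleIntegrable hR <| continuousOn_const.mul <|
      ((continuousOn_id.sub continuousOn_const).pow _).inv₀ fun z hz ↦
        pow_ne_zero _ (sub_ne_zero.mpr (ne_of_mem_of_not_mem hz (hw i hi)))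
  rw [integral_fun_sum hint]
  simp_rw [integral_const_mul, integral_sub_pow_inv c _ hR, mul_ite, mul_zero,
    Finset.sum_ite, Finset.sum_const_zero, add_zero, Finset.mul_sum, mul_comm]

end circleIntegral

namespace T2

variable {K : Type*} [Field K]

def integrand (y₁ y₂ h r ξ : K) : K :=
  y₁ * y₂ * ((1 + h * r * ξ) * (1 + h / (r * ξ)) - (y₂ - 1) ^ 2) ^ 2 /
      ((y₂ + h * r * ξ) * (y₂ + h / (r * ξ))) ^ 2 *
    (1 / (ξ - 1 / r) + 1 / (ξ + 1 / r) - 2 / (ξ + h / (y₂ * r)))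

/-- The partial fraction decomposition of `integrand` is
`∑ i, coeff i * (ξ - pole i) ^ (-order i)`; the triple pole `-h/(y₂ r)` is listed three times. -/
def pole (y₂ h r : K) : Fin 6 → K :=
  ![1 / r, -(1 / r), -(h / (y₂ * r)), -(h / (y₂ * r)), -(h / (y₂ * r)), -(y₂ / (h * r))]

def order : Fin 6 → ℕ := ![1, 1, 1, 2, 3, 1]

def coeff (y₁ y₂ h r : K) : Fin 6 → K :=
  ![y₁ * y₂ * ((1 + h) ^ 2 - (y₂ - 1) ^ 2) ^ 2 / (y₂ + h) ^ 4,
    y₁ * y₂ * ((1 - h) ^ 2 - (y₂ - 1) ^ 2) ^ 2 / (y₂ - h) ^ 4,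
    2 * y₁ * y₂ * (4 * y₂ ^ 3 - y₂ ^ 4 - 4 * y₂ ^ 2 - 5 * h ^ 2 * y₂ ^ 2 + 10 * h ^ 2 * y₂
      - 3 * h ^ 2 - h ^ 4) / ((y₂ + h) * (y₂ - h)) ^ 2,
    2 * y₁ * h * (2 * y₂ ^ 4 - 6 * y₂ ^ 3 + 4 * y₂ ^ 2 + h ^ 2 * y₂ ^ 2 - h ^ 2) /
      (r * y₂ ^ 2 * ((y₂ + h) * (y₂ - h))),
    -2 * y₁ * h ^ 2 * (y₂ - 1) ^ 2 / (r ^ 2 * y₂ ^ 3),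
    -2 * y₁ * h ^ 2 * y₂ * (y₂ - 1) ^ 2 / ((y₂ + h) * (y₂ - h)) ^ 2]

theorem integrand_eq_sum {y₁ y₂ h r ξ : K} (hy₂ : y₂ ≠ 0) (hh : h ≠ 0) (hr : r ≠ 0)
    (hadd : y₂ + h ≠ 0) (hsub : y₂ - h ≠ 0) (hξ : ξ ≠ 0) (hpole : ∀ i, ξ ≠ pole y₂ h r i) :
    integrand y₁ y₂ h r ξ = ∑ i, coeff y₁ y₂ h r i * ((ξ - pole y₂ h r i) ^ order i)⁻¹ := by
  have h1 : r * ξ - 1 ≠ 0 := fun h0 ↦ hpole 0 <| by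
    simp only [pole, Matrix.cons_val]; field_simp; linear_combination h0
  have h2 : r * ξ + 1 ≠ 0 := fun h0 ↦ hpole 1 <| by
    simp only [pole, Matrix.cons_val]; field_simp; linear_combination h0
  have h3 : y₂ * r * ξ + h ≠ 0 := fun h0 ↦ hpole 2 <| by
    simp only [pole, Matrix.cons_val]; field_simp; linear_combination h0
  have h4 : y₂ + h * r * ξ ≠ 0 := fun h0 ↦ hpole 5 <| by
    simp only [pole, Matrix.cons_val]; field_simp; linear_combination h0
  have e1 : ξ - 1 / r = (r * ξ - 1) / r := by field_simp
  have e2 : ξ + 1 / r = (r * ξ + 1) / r := by field_simp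
  have e3 : ξ + h / (y₂ * r) = (y₂ * r * ξ + h) / (y₂ * r) := by field_simp
  have e4 : ξ + y₂ / (h * r) = (y₂ + h * r * ξ) / (h * r) := by field_simp; ring
  simp only [integrand, Fin.sum_univ_six, coeff, pole, order, Matrix.cons_val, pow_one,
    sub_neg_eq_add]
  rw [e1, e2, e3, e4]
  field_simp
  ring

theorem coeff_zero_add_coeff_one_add_coeff_two {y₁ y₂ h r : K}
    (hsq : h ^ 2 = y₁ + y₂ - y₁ * y₂) (hy₂ : y₂ - 1 ≠ 0) (hadd : y₂ + h ≠ 0) (hsub : y₂ - h ≠ 0) :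
    coeff y₁ y₂ h r 0 + coeff y₁ y₂ h r 1 + coeff y₁ y₂ h r 2 =
      2 * (y₁ * y₂ * h ^ 2 / (y₁ + y₂) ^ 2) := by
  -- eliminating `y₁` leaves an identity of rational functions in `y₂` and `h`
  have hy₁ : y₁ = (y₂ - h ^ 2) / (y₂ - 1) := by
    rw [eq_div_iff hy₂]; linear_combination hsq
  have hsum : y₁ + y₂ = (y₂ + h) * (y₂ - h) / (y₂ - 1) := by
    rw [hy₁]; field_simp; ring
  simp only [coeff, Matrix.cons_val]
  rw [hsum, hy₁]
  field_simp
  ring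

theorem ofReal_pole (y₂ h r : ℝ) (i : Fin 6) :
    ((pole y₂ h r i : ℝ) : ℂ) = pole (y₂ : ℂ) h r i := by
  fin_cases i <;> simp [pole]

theorem abs_pole_lt_one {y₂ h r : ℝ} (hy₂ : 0 < y₂) (hh : 0 < h) (hr : 1 < r) (hhr : h < y₂ * r)
    {i : Fin 6} (hi : i ≠ 5) : |pole y₂ h r i| < 1 := by
  have hr0 : 0 < r := one_pos.trans hr
  have h1 : 1 / r < 1 := (div_lt_one hr0).mpr hr
  have h2 : h / (y₂ * r) < 1 := (div_lt_one (by positivity)).mpr hhr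
  fin_cases i <;> simp_all [pole, abs_of_pos]

theorem one_lt_abs_pole_five {y₂ h r : ℝ} (hh : 0 < h) (hr : 0 < r) (hhr : h * r < y₂) :
    1 < |pole y₂ h r 5| := by
  have : 1 < y₂ / (h * r) := (one_lt_div (by positivity)).mpr hhr
  simpa [pole, abs_of_pos (this.trans' one_pos)] using this

theorem circleIntegral_integrand {y₁ y₂ h r : ℝ} (hy₂ : 1 < y₂) (hh : 0 < h)
    (hsq : h ^ 2 = y₁ + y₂ - y₁ * y₂) (hr : 1 < r) (hhr : h * r < y₂) :
    (∮ ξ in C(0, 1), integrand (y₁ : ℂ) y₂ h r ξ) =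
      4 * π * I * ((y₁ * y₂ * h ^ 2 / (y₁ + y₂) ^ 2 : ℝ) : ℂ) := by
  have hnorm (i : Fin 6) : ‖pole (y₂ : ℂ) h r i‖ = |pole y₂ h r i| := by
    rw [← ofReal_pole, norm_real, Real.norm_eq_abs]
  have hin (i : Fin 6) (hi : i ≠ 5) : pole (y₂ : ℂ) h r i ∈ ball 0 1 := by
    rw [mem_ball_zero_iff, hnorm]
    exact abs_pole_lt_one (by linarith) hh hr (by nlinarith) hi
  have hout : 1 < ‖pole (y₂ : ℂ) h r 5‖ := hnorm 5 ▸ one_lt_abs_pole_five hh (by linarith) hhr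
  have hsphere (i : Fin 6) : pole (y₂ : ℂ) h r i ∉ sphere 0 1 := by
    rw [mem_sphere_zero_iff_norm]
    by_cases hi : i = 5
    · exact hi ▸ hout.ne'
    · exact (mem_ball_zero_iff.mp (hin i hi)).ne
  have hadd : (y₂ : ℂ) + h ≠ 0 := by exact_mod_cast (by linarith : y₂ + h ≠ 0)
  have hsub : (y₂ : ℂ) - h ≠ 0 := by exact_mod_cast (by nlinarith : y₂ - h ≠ 0)
  have hsum : EqOn (integrand (y₁ : ℂ) y₂ h r)
      (fun ξ ↦ ∑ i, coeff (y₁ : ℂ) y₂ h r i * ((ξ - pole (y₂ : ℂ) h r i) ^ order i)⁻¹)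
      (sphere 0 1) := fun ξ hξ ↦
    integrand_eq_sum (by exact_mod_cast (by linarith : y₂ ≠ 0)) (by exact_mod_cast hh.ne')
      (by exact_mod_cast (by linarith : r ≠ 0)) hadd hsub (ne_zero_of_mem_unit_sphere ⟨ξ, hξ⟩)
      fun i he ↦ hsphere i (he ▸ hξ)
  rw [circleIntegral.integral_congr zero_le_one hsum,
    circleIntegral.integral_sum_mul_sub_pow_inv _ _ _ _ zero_le_one fun i _ ↦ hsphere i,
    Finset.sum_filter, Fin.sum_univ_six]
  simp only [order, Fin.isValue, Matrix.cons_val_zero, ne_eq, Fin.reduceEq, not_false_eq_true,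
    hin, and_self, ↓reduceIte, Matrix.cons_val_one, Matrix.cons_val, OfNat.ofNat_ne_one, and_true,
    add_zero, mem_ball, dist_zero_right, not_lt_of_gt hout, and_false, ofReal_div, ofReal_mul,
    ofReal_pow, ofReal_add]
  rw [coeff_zero_add_coeff_one_add_coeff_two (by exact_mod_cast hsq)
    (by exact_mod_cast (by linarith : y₂ - 1 ≠ 0)) hadd hsub]
  ring

end T2

theorem stmt16 (y1 y2 h : ℝ) (hy1 : 1 < y1) (hy2 : 1 < y2)
    (hpos : 0 < y1 + y2 - y1 * y2) (hh : h = Real.sqrt (y1 + y2 - y1 * y2)) :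
    Tendsto (fun r : ℝ =>
      (1 / (4 * (Real.pi : ℂ) * Complex.I)) *
        ∮ ξ in C((0 : ℂ), 1),
          ((y1 : ℂ) * (y2 : ℂ) *
            ((1 + (h : ℂ) * (r : ℂ) * ξ) * (1 + (h : ℂ) / ((r : ℂ) * ξ)) -
              ((y2 - 1 : ℝ) : ℂ) ^ 2) ^ 2 /
            (((y2 : ℂ) + (h : ℂ) * (r : ℂ) * ξ) * ((y2 : ℂ) + (h : ℂ) / ((r : ℂ) * ξ))) ^ 2) *
          (1 / (ξ - 1 / (r : ℂ)) + 1 / (ξ + 1 / (r : ℂ)) -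
            2 / (ξ + (h : ℂ) / ((y2 : ℂ) * (r : ℂ)))))
      (nhdsWithin 1 (Set.Ioi 1))
      (nhds ((y1 * y2 * h ^ 2 / (y1 + y2) ^ 2 : ℝ) : ℂ)) := by
  have h0 : 0 < h := hh ▸ Real.sqrt_pos.mpr hpos
  have hsq : h ^ 2 = y1 + y2 - y1 * y2 := hh ▸ Real.sq_sqrt hpos.le
  have hlt : 1 < y2 / h := (one_lt_div h0).mpr (by nlinarith)
  have h4πI : 4 * (π : ℂ) * I ≠ 0 := by simp [pi_ne_zero, I_ne_zero]
  refine tendsto_const_nhds.congr' ?_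
  filter_upwards [Ioo_mem_nhdsGT hlt] with r ⟨hr, hry⟩
  have key :=
    T2.circleIntegral_integrand hy2 h0 hsq hr (by rwa [lt_div_iff₀ h0, mul_comm] at hry)
  simp only [T2.integrand] at key
  rw [ofReal_sub, ofReal_one, key, one_div, inv_mul_cancel_left₀ h4πI]
end
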